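/- arXiv:2104.03200 — 6 statements merged into one kernel-verified Lean document; each statement's English description precedes it below -/
import Mathlib

section
/- Let p be a probability distribution on an I_X × I_Y × I_Z table with all third-variable marginals p_{•,•,k} positive. Define the two-way LD D_{X_i,Y_j} = p_{i,j,•} - p_{i,•,•} p_{•,j,•}, the conditional LD D_{X_i,Y_j|Z_k} = p_{i,j,k}/p_{•,•,k} - (p_{i,•,k}/p_{•,•,k})(p_{•,j,k}/p_{•,•,k}), and the weighted average D̄_{X_i,Y_j|Z} = Σ_k p_{•,•,k} D_{X_i,Y_j|Z_k}. Then D_{X_i,Y_j} - D̄_{X_i,Y_j|Z} = Σ_{k=1}^{I_Z} D_{X_i,Z_k} D_{Y_j,Z_k} / p_{•,•,k}, where D_{X_i,Z_k} = p_{i,•,k} - p_{i,•,•} p_{•,•,k} and D_{Y_j,Z_k} = p_{•,j,k} - p_{•,j,•} p_{•,•,k}. -/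
/-- Quantification of Simpson's paradox:
`D_{X_i,Y_j} - D̄_{X_i,Y_j|Z} = Σ_k D_{X_i,Z_k} D_{Y_j,Z_k} / p_{•,•,k}`. -/
theorem simpson_quantification {IX IY IZ : ℕ} (p : Fin IX × Fin IY × Fin IZ → ℝ)
    (hpos : ∀ x, 0 ≤ p x) (hsum : ∑ x, p x = 1)
    (hz : ∀ k : Fin IZ, 0 < ∑ i', ∑ j', p (i', j', k))
    (i : Fin IX) (j : Fin IY) :
    ((∑ k, p (i, j, k)) -
        (∑ j', ∑ k, p (i, j', k)) * (∑ i', ∑ k, p (i', j, k))) -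
      (∑ k, (∑ i', ∑ j', p (i', j', k)) *
        (p (i, j, k) / (∑ i', ∑ j', p (i', j', k)) -
          ((∑ j', p (i, j', k)) / (∑ i', ∑ j', p (i', j', k))) *
            ((∑ i', p (i', j, k)) / (∑ i', ∑ j', p (i', j', k))))) =
    ∑ k, ((∑ j', p (i, j', k)) -
            (∑ j', ∑ k', p (i, j', k')) * (∑ i', ∑ j', p (i', j', k))) *
          ((∑ i', p (i', j, k)) -
            (∑ i', ∑ k', p (i', j, k')) * (∑ i', ∑ j', p (i', j', k))) /
          (∑ i', ∑ j', p (i', j', k)) := by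
  set N : Fin IZ → ℝ := fun k => ∑ i', ∑ j', p (i', j', k) with hN
  set a : Fin IZ → ℝ := fun k => ∑ j', p (i, j', k) with ha
  set b : Fin IZ → ℝ := fun k => ∑ i', p (i', j, k) with hb
  have hNne : ∀ k, N k ≠ 0 := fun k => (hz k).ne'
  have hA : (∑ j', ∑ k, p (i, j', k)) = ∑ k, a k := Finset.sum_comm
  have hB : (∑ i', ∑ k, p (i', j, k)) = ∑ k, b k := Finset.sum_comm
  have hNsum : ∑ k, N k = 1 := by
    rw [← hsum, Fintype.sum_prod_type]
    simp only [Fintype.sum_prod_type]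
    rw [Finset.sum_comm]
    exact Finset.sum_congr rfl fun k _ => Finset.sum_comm
  have h1 : (∑ k, N k * (p (i, j, k) / N k - (a k / N k) * (b k / N k))) =
      ∑ k, (p (i, j, k) - a k * b k / N k) := by
    refine Finset.sum_congr rfl fun k _ => ?_
    field_simp [hNne k]
  have h2 : (∑ k, (a k - (∑ k', a k') * N k) * (b k - (∑ k', b k') * N k) / N k) =
      ∑ k, (a k * b k / N k - (∑ k', a k') * b k - (∑ k', b k') * a k +
        (∑ k', a k') * (∑ k', b k') * N k) := by
    refine Finset.sum_congr rfl fun k _ => ?_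
    field_simp [hNne k]
    ring
  rw [hA, hB]
  rw [h1, h2]
  simp only [Finset.sum_sub_distrib, Finset.sum_add_distrib, ← Finset.mul_sum, hNsum]
  ring
end

section
/- In a 2×2×2 probability table in which both conditional LDs are defined, if D_{X_1,Z_1} = 0 and D_{Y_1,Z_1} = 0 (i.e., Z is pairwise independent of X and of Y), then D_{X_1,Y_1} equals the weighted average D̄_{X_1,Y_1|Z}, so Simpson's paradox cannot occur. -/
/-- In a 2×2×2 table, if `Z` is pairwise independent of `X` and of `Y`
(`D_{X_1,Z_1} = 0` and `D_{Y_1,Z_1} = 0`), then the marginal LD equals the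
weighted average of the conditional LDs: Simpson's paradox cannot occur. -/
theorem no_simpson_of_independence (p : Fin 2 × Fin 2 × Fin 2 → ℝ)
    (hpos : ∀ x, 0 ≤ p x) (hsum : ∑ x, p x = 1)
    (h0 : 0 < ∑ i, ∑ j, p (i, j, 0)) (h1 : (∑ i, ∑ j, p (i, j, 0)) < 1)
    (hXZ : (∑ j, p (0, j, 0)) -
        (∑ j, ∑ k, p (0, j, k)) * (∑ i, ∑ j, p (i, j, 0)) = 0)
    (hYZ : (∑ i, p (i, 0, 0)) -
        (∑ i, ∑ k, p (i, 0, k)) * (∑ i, ∑ j, p (i, j, 0)) = 0) :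
    (∑ k, p (0, 0, k)) -
        (∑ j, ∑ k, p (0, j, k)) * (∑ i, ∑ k, p (i, 0, k)) =
      ∑ k, (∑ i, ∑ j, p (i, j, k)) *
        (p (0, 0, k) / (∑ i, ∑ j, p (i, j, k)) -
          (∑ j, p (0, j, k)) * (∑ i, p (i, 0, k)) /
            (∑ i, ∑ j, p (i, j, k)) ^ 2) := by
  simp only [Fintype.sum_prod_type, Fin.sum_univ_two, Prod.mk_zero_zero,
    Prod.mk_one_one] at *
  set a := p 0 with ha
  set b := p (0, 0, 1) with hb
  set c := p (0, 1, 0) with hc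
  set d := p (0, 1) with hd
  set e := p (1, 0) with he
  set f := p (1, 0, 1) with hf
  set g := p (1, 1, 0) with hg
  set h := p 1 with hh
  have hn0 : a + c + (e + g) ≠ 0 := ne_of_gt h0
  have hn1 : b + d + (f + h) ≠ 0 := by nlinarith
  have key : (a + b + (c + d)) * (a + b + (e + f)) =
      (a + c) * (a + e) / (a + c + (e + g)) +
        (b + d) * (b + f) / (b + d + (f + h)) := by
    field_simp
    linear_combination -(((a + e - (a + b + (e + f)) * (a + c + (e + g))) * ((a + c + (e + g)) + (b + d + (f + h))) + (a + c + (e + g)) * (a + b + (e + f)) * ((a + c + (e + g)) + (b + d + (f + h)) - 1)) * hXZ + ((a + c + (e + g)) * (a + b + (c + d)) * ((a + c + (e + g)) + (b + d + (f + h)) - 1)) * hYZ + ((a + c + (e + g)) * (a + b + (c + d)) * (a + b + (e + f)) * ((a + c + (e + g)) + (b + d + (f + h)) - 1) - (a + c + (e + g)) * (b + d + (f + h)) * (a + b + (c + d)) * (a + b + (e + f))) * hsum)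
  have e0 : (a + c + (e + g)) * (a / (a + c + (e + g)) -
      (a + c) * (a + e) / (a + c + (e + g)) ^ 2) =
      a - (a + c) * (a + e) / (a + c + (e + g)) := by
    field_simp
  have e1 : (b + d + (f + h)) * (b / (b + d + (f + h)) -
      (b + d) * (b + f) / (b + d + (f + h)) ^ 2) =
      b - (b + d) * (b + f) / (b + d + (f + h)) := by
    field_simp
  rw [e0, e1]
  linear_combination -key
end

section
/- For an I_X × I_Y × I_Z probability table with positive stratum probabilities, expressed via correlation coefficients: D_{X_i,Y_j} - D̄_{X_i,Y_j|Z} = Σ_k √(p_{i,•,•}(1-p_{i,•,•}) p_{•,j,•}(1-p_{•,j,•})) ρ_{X_i,Z_k} ρ_{Y_j,Z_k} (1 - p_{•,•,k}), where ρ_{X_i,Z_k} = D_{X_i,Z_k}/√(p_{i,•,•}(1-p_{i,•,•}) p_{•,•,k}(1-p_{•,•,k})) and similarly for ρ_{Y_j,Z_k}; in the 2×2×2 case this reduces to D_{X_1,Y_1} - D̄_{X_1,Y_1|Z} = √(p_{1,•,•}(1-p_{1,•,•}) p_{•,1,•}(1-p_{•,1,•})) ρ_{X_1,Z_1} ρ_{Y_1,Z_1}.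 -/
/-!
Since `p_{••k} (p_{11k}/p_{••k} - p_{1•k} p_{•1k}/p_{••k}²) = p_{11k} - p_{1•k} p_{•1k}/p_{••k}`,
the gap `D - D̄` equals `∑ₖ p_{1•k} p_{•1k}/p_{••k} - p_{1••} p_{•1•}`, which regroups as
`∑ₖ D_{X₁,Z_k} D_{Y₁,Z_k} / p_{••k}` because `∑ₖ p_{••k} = 1`. With two strata
`D_{X₁,Z₂} = -D_{X₁,Z₁}`, so the sum collapses to `D_{X₁,Z₁} D_{Y₁,Z₁} / (p_{••1}(1 - p_{••1}))`,
and this is what the product of the square-root factor and the two correlations reduces to.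
Lean's index `0` is the paper's index `1`.
-/

open Finset

lemma sqrt_mul_mul_div_sqrt_mul_mul_div_sqrt_mul {A B C : ℝ} (hA : 0 < A) (hB : 0 < B)
    (hC : 0 ≤ C) (x y : ℝ) :
    √(A * B) * (x / √(A * C)) * (y / √(B * C)) = x * y / C := by
  rw [Real.sqrt_mul hA.le, Real.sqrt_mul hA.le, Real.sqrt_mul hB.le]
  have hsA : √A ≠ 0 := (Real.sqrt_pos.mpr hA).ne'
  have hsB : √B ≠ 0 := (Real.sqrt_pos.mpr hB).ne'
  rcases hC.eq_or_lt with rfl | hC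
  · simp
  have hsC : √C ≠ 0 := (Real.sqrt_pos.mpr hC).ne'
  field_simp
  rw [Real.sq_sqrt hC.le]
  ring

section

variable {ι : Type*} (s : Finset ι) {a b c : ι → ℝ}

lemma sum_mul_div_sub_div_sq (x u : ι → ℝ) (hc : ∀ k ∈ s, c k ≠ 0) :
    ∑ k ∈ s, c k * (x k / c k - u k / c k ^ 2) = ∑ k ∈ s, x k - ∑ k ∈ s, u k / c k := by
  rw [← sum_sub_distrib]
  refine sum_congr rfl fun k hk => ?_
  field_simp [hc k hk]

lemma sum_mul_div_sub_sum_mul_sum (hc1 : ∑ k ∈ s, c k = 1) (hc : ∀ k ∈ s, c k ≠ 0) :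
    ∑ k ∈ s, a k * b k / c k - (∑ k ∈ s, a k) * (∑ k ∈ s, b k) =
      ∑ k ∈ s, (a k - (∑ k ∈ s, a k) * c k) * (b k - (∑ k ∈ s, b k) * c k) / c k := by
  set A := ∑ k ∈ s, a k
  set B := ∑ k ∈ s, b k
  have hexp : ∀ k ∈ s, (a k - A * c k) * (b k - B * c k) / c k =
      a k * b k / c k - B * a k - A * b k + A * B * c k := by
    intro k hk
    field_simp [hc k hk]
    ring
  rw [sum_congr rfl hexp, sum_add_distrib, sum_sub_distrib, sum_sub_distrib, ← mul_sum, ← mul_sum,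
    ← mul_sum, hc1]
  ring

end

lemma sum_fin_two_mul_div_of_add_eq_one {a b c : Fin 2 → ℝ} (hc1 : c 0 + c 1 = 1)
    (hc0 : c 0 ≠ 0) (hc0' : 1 - c 0 ≠ 0) :
    ∑ k, (a k - (∑ k, a k) * c k) * (b k - (∑ k, b k) * c k) / c k =
      (a 0 - (∑ k, a k) * c 0) * (b 0 - (∑ k, b k) * c 0) / (c 0 * (1 - c 0)) := by
  have hc1' : c 1 = 1 - c 0 := by linarith
  simp only [Fin.sum_univ_two, hc1']
  field_simp
  ring

theorem simpson_correlation_form_general (p : Fin 2 × Fin 2 × Fin 2 → ℝ)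
    (hsum : ∑ x, p x = 1)
    (hx0 : 0 < ∑ j, ∑ k, p (0, j, k)) (hx1 : (∑ j, ∑ k, p (0, j, k)) < 1)
    (hy0 : 0 < ∑ i, ∑ k, p (i, 0, k)) (hy1 : (∑ i, ∑ k, p (i, 0, k)) < 1)
    (hz0 : 0 < ∑ i, ∑ j, p (i, j, 0)) (hz1 : (∑ i, ∑ j, p (i, j, 0)) < 1) :
    ((∑ k, p (0, 0, k)) -
        (∑ j, ∑ k, p (0, j, k)) * (∑ i, ∑ k, p (i, 0, k))) -
      (∑ k, (∑ i, ∑ j, p (i, j, k)) *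
        (p (0, 0, k) / (∑ i, ∑ j, p (i, j, k)) -
          (∑ j, p (0, j, k)) * (∑ i, p (i, 0, k)) /
            (∑ i, ∑ j, p (i, j, k)) ^ 2)) =
    Real.sqrt ((∑ j, ∑ k, p (0, j, k)) * (1 - ∑ j, ∑ k, p (0, j, k)) *
        ((∑ i, ∑ k, p (i, 0, k)) * (1 - ∑ i, ∑ k, p (i, 0, k)))) *
      (((∑ j, p (0, j, 0)) -
          (∑ j, ∑ k, p (0, j, k)) * (∑ i, ∑ j, p (i, j, 0))) /
        Real.sqrt ((∑ j, ∑ k, p (0, j, k)) * (1 - ∑ j, ∑ k, p (0, j, k)) *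
          ((∑ i, ∑ j, p (i, j, 0)) * (1 - ∑ i, ∑ j, p (i, j, 0))))) *
      (((∑ i, p (i, 0, 0)) -
          (∑ i, ∑ k, p (i, 0, k)) * (∑ i, ∑ j, p (i, j, 0))) /
        Real.sqrt ((∑ i, ∑ k, p (i, 0, k)) * (1 - ∑ i, ∑ k, p (i, 0, k)) *
          ((∑ i, ∑ j, p (i, j, 0)) * (1 - ∑ i, ∑ j, p (i, j, 0))))) := by
  set c : Fin 2 → ℝ := fun k => ∑ i, ∑ j, p (i, j, k)
  have hc1 : c 0 + c 1 = 1 := by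
    simpa [c, Fintype.sum_prod_type, Fin.sum_univ_two, add_add_add_comm] using hsum
  have hc : ∀ k, c k ≠ 0 := by
    simp only [Fin.forall_fin_two]
    exact ⟨hz0.ne', by linarith⟩
  rw [sqrt_mul_mul_div_sqrt_mul_mul_div_sqrt_mul (by nlinarith) (by nlinarith) (by nlinarith),
    sum_mul_div_sub_div_sq _ _ _ fun k _ => hc k, sub_sub_sub_cancel_left,
    sum_comm (f := fun j k => p (0, j, k)), sum_comm (f := fun i k => p (i, 0, k)),
    sum_mul_div_sub_sum_mul_sum _ (by simpa [Fin.sum_univ_two] using hc1) fun k _ => hc k,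
    sum_fin_two_mul_div_of_add_eq_one hc1 (hc 0) (by linarith)]

/-- Simpson's paradox formula in correlation form for a 2×2×2 table:
`D_{X_1,Y_1} - D̄_{X_1,Y_1|Z} = √(p_1(1-p_1) p_2(1-p_2)) ρ_{X_1,Z_1} ρ_{Y_1,Z_1}`. -/
theorem simpson_correlation_form (p : Fin 2 × Fin 2 × Fin 2 → ℝ)
    (hpos : ∀ x, 0 ≤ p x) (hsum : ∑ x, p x = 1)
    (hx0 : 0 < ∑ j, ∑ k, p (0, j, k)) (hx1 : (∑ j, ∑ k, p (0, j, k)) < 1)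
    (hy0 : 0 < ∑ i, ∑ k, p (i, 0, k)) (hy1 : (∑ i, ∑ k, p (i, 0, k)) < 1)
    (hz0 : 0 < ∑ i, ∑ j, p (i, j, 0)) (hz1 : (∑ i, ∑ j, p (i, j, 0)) < 1) :
    ((∑ k, p (0, 0, k)) -
        (∑ j, ∑ k, p (0, j, k)) * (∑ i, ∑ k, p (i, 0, k))) -
      (∑ k, (∑ i, ∑ j, p (i, j, k)) *
        (p (0, 0, k) / (∑ i, ∑ j, p (i, j, k)) -
          (∑ j, p (0, j, k)) * (∑ i, p (i, 0, k)) /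
            (∑ i, ∑ j, p (i, j, k)) ^ 2)) =
    Real.sqrt ((∑ j, ∑ k, p (0, j, k)) * (1 - ∑ j, ∑ k, p (0, j, k)) *
        ((∑ i, ∑ k, p (i, 0, k)) * (1 - ∑ i, ∑ k, p (i, 0, k)))) *
      (((∑ j, p (0, j, 0)) -
          (∑ j, ∑ k, p (0, j, k)) * (∑ i, ∑ j, p (i, j, 0))) /
        Real.sqrt ((∑ j, ∑ k, p (0, j, k)) * (1 - ∑ j, ∑ k, p (0, j, k)) *
          ((∑ i, ∑ j, p (i, j, 0)) * (1 - ∑ i, ∑ j, p (i, j, 0))))) *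
      (((∑ i, p (i, 0, 0)) -
          (∑ i, ∑ k, p (i, 0, k)) * (∑ i, ∑ j, p (i, j, 0))) /
        Real.sqrt ((∑ i, ∑ k, p (i, 0, k)) * (1 - ∑ i, ∑ k, p (i, 0, k)) *
          ((∑ i, ∑ j, p (i, j, 0)) * (1 - ∑ i, ∑ j, p (i, j, 0))))) :=
  simpson_correlation_form_general p hsum hx0 hx1 hy0 hy1 hz0 hz1
end

section
/- If p_1 = p_2 = p_3 = 1/2, then Bennett's additive measure of three-way interaction agrees with Bartlett's multiplicative criterion: setting D = L_{1,2,3} = p_{1,1,1} - (p_1 p_2 p_3 + p_1 D_{2,3} + p_2 D_{1,3} + p_3 D_{1,2}) makes Bartlett's equation (p_{1,1,1}-D)(p_{1,2,2}-D)(p_{2,1,2}-D)(p_{2,2,1}-D) = (p_{1,1,2}+D)(p_{1,2,1}+D)(p_{2,1,1}+D)(p_{2,2,2}+D) hold, when the cells are expressed via the parametrization (17) with p_1 = p_2 = p_3 = 1/2. -/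
/-- If `p₁ = p₂ = p₃ = 1/2`, then Bennett's additive measure `L_{1,2,3}`
satisfies Bartlett's multiplicative criterion, with the cells expressed via the
parametrization (17). -/
theorem bennett_eq_bartlett_of_half
    (p1 p2 p3 D12 D13 D23 t : ℝ)
    (h1 : p1 = 1 / 2) (h2 : p2 = 1 / 2) (h3 : p3 = 1 / 2) :
    (t - (t - (p1 * p2 * p3 + p1 * D23 + p2 * D13 + p3 * D12))) *
        ((p1 * (1 - p2 - p3) - D12 - D13 + t) -
          (t - (p1 * p2 * p3 + p1 * D23 + p2 * D13 + p3 * D12))) *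
        ((p2 * (1 - p1 - p3) - D12 - D23 + t) -
          (t - (p1 * p2 * p3 + p1 * D23 + p2 * D13 + p3 * D12))) *
        ((p3 * (1 - p1 - p2) - D13 - D23 + t) -
          (t - (p1 * p2 * p3 + p1 * D23 + p2 * D13 + p3 * D12))) =
      ((D12 + p1 * p2 - t) +
          (t - (p1 * p2 * p3 + p1 * D23 + p2 * D13 + p3 * D12))) *
        ((D13 + p1 * p3 - t) +
          (t - (p1 * p2 * p3 + p1 * D23 + p2 * D13 + p3 * D12))) *
        ((D23 + p2 * p3 - t) +
          (t - (p1 * p2 * p3 + p1 * D23 + p2 * D13 + p3 * D12))) *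
        ((D12 + D13 + D23 + (1 - p1) * (1 - p2 - p3) + p2 * p3 - t) +
          (t - (p1 * p2 * p3 + p1 * D23 + p2 * D13 + p3 * D12))) := by
  subst h1 h2 h3; ring
end

section
/- If at least two of the three pairwise disequilibria D_{1,2}, D_{1,3}, D_{2,3} of a 2×2×2 table vanish, then D = L_{1,2,3} (Bennett's measure) satisfies Bartlett's criterion, i.e., the additive and multiplicative measures of three-way interaction agree. -/
/-- If at least two of the three pairwise disequilibria of a 2×2×2 table vanish,
then Bennett's measure `L_{1,2,3}` satisfies Bartlett's criterion. -/
theorem bennett_eq_bartlett_of_two_zero_lds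
    (p1 p2 p3 D12 D13 D23 t : ℝ)
    (h10 : 0 < p1) (h11 : p1 < 1) (h20 : 0 < p2) (h21 : p2 < 1)
    (h30 : 0 < p3) (h31 : p3 < 1)
    (hcases : (D12 = 0 ∧ D13 = 0) ∨ (D12 = 0 ∧ D23 = 0) ∨ (D13 = 0 ∧ D23 = 0)) :
    (t - (t - (p1 * p2 * p3 + p1 * D23 + p2 * D13 + p3 * D12))) *
        ((p1 * (1 - p2 - p3) - D12 - D13 + t) -
          (t - (p1 * p2 * p3 + p1 * D23 + p2 * D13 + p3 * D12))) *
        ((p2 * (1 - p1 - p3) - D12 - D23 + t) -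
          (t - (p1 * p2 * p3 + p1 * D23 + p2 * D13 + p3 * D12))) *
        ((p3 * (1 - p1 - p2) - D13 - D23 + t) -
          (t - (p1 * p2 * p3 + p1 * D23 + p2 * D13 + p3 * D12))) =
      ((D12 + p1 * p2 - t) +
          (t - (p1 * p2 * p3 + p1 * D23 + p2 * D13 + p3 * D12))) *
        ((D13 + p1 * p3 - t) +
          (t - (p1 * p2 * p3 + p1 * D23 + p2 * D13 + p3 * D12))) *
        ((D23 + p2 * p3 - t) +
          (t - (p1 * p2 * p3 + p1 * D23 + p2 * D13 + p3 * D12))) *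
        ((D12 + D13 + D23 + (1 - p1) * (1 - p2 - p3) + p2 * p3 - t) +
          (t - (p1 * p2 * p3 + p1 * D23 + p2 * D13 + p3 * D12))) := by
  obtain ⟨h1,h2⟩|⟨h1,h2⟩|⟨h1,h2⟩ := hcases <;> subst h1 <;> subst h2 <;> ring
end

section
/- (Roy–Kastenbaum equivalence) In a 2×2×2 probability table with D_{1,3} = 0 and D_{2,3} = 0, Bennett's measure vanishes (equivalently p_{1,1,1} = p_3 p_{12} with p_{12} = p_{1,1,•}) if and only if the third variable is jointly independent of the pair of the first two: p_{i,j,k} = p_{•,•,k} · p_{i,j,•} for all i,j,k ∈ {1,2}. -/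
/-- Roy–Kastenbaum equivalence: in a 2×2×2 probability table with
`D_{1,3} = 0` and `D_{2,3} = 0`, Bennett's measure vanishes
(`p_{1,1,1} = p_3 p_{12}`) iff the third variable is jointly independent of
the pair of the first two variables. -/
theorem roy_kastenbaum_equivalence
    (p1 p2 p3 p12 p13 p23 t : ℝ) (p : Fin 2 × Fin 2 × Fin 2 → ℝ)
    (h30 : 0 < p3) (h31 : p3 < 1)
    (h13 : p13 = p1 * p3) (h23 : p23 = p2 * p3)
    (hp111 : p (0, 0, 0) = t) (hp112 : p (0, 0, 1) = p12 - t)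
    (hp121 : p (0, 1, 0) = p13 - t) (hp122 : p (0, 1, 1) = p1 - p12 - p13 + t)
    (hp211 : p (1, 0, 0) = p23 - t) (hp212 : p (1, 0, 1) = p2 - p12 - p23 + t)
    (hp221 : p (1, 1, 0) = p3 - p13 - p23 + t)
    (hp222 : p (1, 1, 1) = 1 - p1 - p2 - p3 + p12 + p13 + p23 - t) :
    t = p3 * p12 ↔
      ∀ i j k : Fin 2, p (i, j, k) =
        (∑ i', ∑ j', p (i', j', k)) * (∑ k', p (i, j, k')) := by
  subst h13 h23
  constructor
  · intro ht i j k
    subst ht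
    fin_cases i <;> fin_cases j <;> fin_cases k <;>
      simp only [Fin.sum_univ_two, Fin.mk_zero, Fin.mk_one, Fin.isValue,
        hp111, hp112, hp121, hp122, hp211, hp212, hp221, hp222] <;> ring
  · intro h
    have h0 := h 0 0 0
    simp only [Fin.sum_univ_two, hp111, hp112, hp121, hp122, hp211, hp212,
      hp221, hp222] at h0
    linarith [h0]
end
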